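/- Holomorphic implicit function theorem: Let U ⊂ ℂ^(m+1) be open, f : U → ℂ holomorphic, and p = (w, z) ∈ U with w ∈ ℂ^m, z ∈ ℂ, f(p) = 0, and ∂f/∂z(p) ≠ 0. Then there exist a neighborhood V ⊂ ℂ^m of w, a holomorphic function g : V → ℂ, and a neighborhood W ⊆ U of p such that the zero set of f in W equals {(w̃, z̃) ∈ W : z̃ = g(w̃)}. -/

import Mathlib

/-!
An analytic function is `C^ω`, so the `C^n` implicit function theorem applies to `f` at `(w, z)`,
and the implicit function it produces is again `C^ω`, i.e. analytic. Its hypothesis, invertibility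
of the partial derivative `ℂ →L[ℂ] ℂ` in the last variable, is exactly `∂f/∂z (w, z) ≠ 0`.
-/

open Filter Topology

theorem ContinuousLinearMap.isInvertible_of_isUnit_apply_one {R : Type*} [Semiring R]
    [TopologicalSpace R] [ContinuousMul R] {L : R →L[R] R} (h : IsUnit (L 1)) :
    L.IsInvertible :=
  ⟨ContinuousLinearEquiv.unitsEquivAut R h.unit, by ext; simp⟩

theorem deriv_comp_prodMk_left_eq_fderiv_inr {𝕜 E F : Type*} [NontriviallyNormedField 𝕜]
    [NormedAddCommGroup E] [NormedSpace 𝕜 E] [NormedAddCommGroup F] [NormedSpace 𝕜 F]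
    {f : E × 𝕜 → F} {x : E} {y : 𝕜} (hf : DifferentiableAt 𝕜 f (x, y)) :
    deriv (fun y' => f (x, y')) y = (fderiv 𝕜 f (x, y) ∘L .inr 𝕜 E 𝕜) 1 :=
  (hf.hasFDerivAt.comp y (hasFDerivAt_prodMk_right x y)).hasDerivAt.deriv

open scoped ContDiff in
theorem AnalyticAt.exists_analyticAt_implicitFunction {𝕜 E₁ E₂ F : Type*} [RCLike 𝕜]
    [NormedAddCommGroup E₁] [NormedSpace 𝕜 E₁] [CompleteSpace E₁]
    [NormedAddCommGroup E₂] [NormedSpace 𝕜 E₂] [CompleteSpace E₂]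
    [NormedAddCommGroup F] [NormedSpace 𝕜 F] [CompleteSpace F]
    {f : E₁ × E₂ → F} {u : E₁ × E₂}
    (hf : AnalyticAt 𝕜 f u) (hf₂ : (fderiv 𝕜 f u ∘L .inr 𝕜 E₁ E₂).IsInvertible) :
    ∃ ψ : E₁ → E₂, AnalyticAt 𝕜 ψ u.1 ∧ ∀ᶠ v in 𝓝 u, f v = f u ↔ ψ v.1 = v.2 := by
  have hcd : ContDiffAt 𝕜 ω f u := hf.contDiffAt
  exact ⟨hcd.implicitFunction (by simp) hf₂, (hcd.contDiffAt_implicitFunction _ hf₂).analyticAt,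
    hcd.eventually_apply_eq_iff_implicitFunction _ hf₂⟩

/-- Holomorphic implicit function theorem: let `U ⊂ ℂ^m × ℂ` be open,
`f : U → ℂ` holomorphic, and `p = (w, z) ∈ U` with `f(p) = 0` and `∂f/∂z (p) ≠ 0`.
Then there are a neighborhood `V` of `w`, a holomorphic `g : V → ℂ`, and a neighborhood
`W ⊆ U` of `p` such that the zero set of `f` in `W` is exactly the graph
`{(w̃, z̃) ∈ W : z̃ = g(w̃)}`. -/
theorem holomorphic_implicit_function (m : ℕ)
    (U : Set ((Fin m → ℂ) × ℂ)) (hU : IsOpen U)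
    (f : (Fin m → ℂ) × ℂ → ℂ) (hf : AnalyticOnNhd ℂ f U)
    (w : Fin m → ℂ) (z : ℂ) (hp : (w, z) ∈ U)
    (hf0 : f (w, z) = 0)
    (hfz : deriv (fun z' : ℂ => f (w, z')) z ≠ 0) :
    ∃ V ∈ nhds w, ∃ g : (Fin m → ℂ) → ℂ, AnalyticOnNhd ℂ g V ∧
      ∃ W ∈ nhds ((w, z) : (Fin m → ℂ) × ℂ), W ⊆ U ∧
        {q ∈ W | f q = 0} = {q ∈ W | q.1 ∈ V ∧ q.2 = g q.1} := by
  have hfp := hf _ hp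
  rw [deriv_comp_prodMk_left_eq_fderiv_inr hfp.differentiableAt] at hfz
  obtain ⟨g, hg, hzero⟩ := hfp.exists_analyticAt_implicitFunction
    (ContinuousLinearMap.isInvertible_of_isUnit_apply_one hfz.isUnit)
  rw [hf0] at hzero
  refine ⟨{x | AnalyticAt ℂ g x}, hg.eventually_analyticAt, g, fun _ hx => hx,
    U ∩ {q | f q = 0 ↔ g q.1 = q.2} ∩ Prod.fst ⁻¹' {x | AnalyticAt ℂ g x}, ?_,
    fun q hq => hq.1.1, ?_⟩
  · exact inter_mem (inter_mem (hU.mem_nhds hp) hzero)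
      (continuousAt_fst.preimage_mem_nhds hg.eventually_analyticAt)
  · ext q
    simp only [Set.mem_ofPred_eq, Set.mem_inter_iff, Set.mem_preimage]
    tauto
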